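/- In ℚ⟦X⟧ one has the identity Σ_{n=0}^∞ a^e_ed(n)·X^n = ( (−X²; X²)_∞ / (X; X²)_∞ ) · Σ_{n=1}^∞ X^{2n²−n} / (−X²; X²)_n, where the sum on the right runs over n ≥ 1 (the n-th summand corresponding to partitions with mex equal to 2n). -/

import Mathlib

open PowerSeries Finset
open scoped Classical

noncomputable section

instance : TopologicalSpace (PowerSeries ℚ) :=
  @Pi.topologicalSpace (Unit →₀ ℕ) (fun _ => ℚ) (fun _ => inferInstance)

/-- `(ε X^b ; X^d)_∞ = ∏_{k=0}^∞ (1 - ε X^{b+dk})`, a coefficientwise-convergent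
infinite product in `ℚ⟦X⟧` with the product topology. -/
def pochInf (ε : ℚ) (b d : ℕ) : PowerSeries ℚ :=
  ∏' k : ℕ, (1 - PowerSeries.C (R := ℚ) ε * PowerSeries.X ^ (b + d * k))

/-- `(ε X^b ; X^d)_m = ∏_{k=0}^{m-1} (1 - ε X^{b+dk})` -/
def pochFin (ε : ℚ) (b d m : ℕ) : PowerSeries ℚ :=
  ∏ k ∈ Finset.range m, (1 - PowerSeries.C (R := ℚ) ε * PowerSeries.X ^ (b + d * k))

/-- the smallest positive integer that is not a part of `l` -/
def pmex {n : ℕ} (l : n.Partition) : ℕ := sInf {k : ℕ | 0 < k ∧ k ∉ l.parts}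

/-- the smallest odd positive integer that is not a part of `l` -/
def pmoex {n : ℕ} (l : n.Partition) : ℕ := sInf {k : ℕ | Odd k ∧ k ∉ l.parts}

/-- the smallest even positive integer that is not a part of `l` -/
def pmeex {n : ℕ} (l : n.Partition) : ℕ := sInf {k : ℕ | Even k ∧ 0 < k ∧ k ∉ l.parts}

/-- every odd part occurs at most once -/
def OddDistinct {n : ℕ} (l : n.Partition) : Prop := ∀ i, Odd i → l.parts.count i ≤ 1

/-- every even part occurs at most once -/
def EvenDistinct {n : ℕ} (l : n.Partition) : Prop := ∀ i, Even i → l.parts.count i ≤ 1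

/-- `a^e_ed(n)`: number of partitions of `n` with distinct even parts and even mex -/
def aeed (n : ℕ) : ℕ :=
  (Finset.univ.filter fun l : n.Partition => EvenDistinct l ∧ Even (pmex l)).card

instance : T2Space (PowerSeries ℚ) := inferInstanceAs (T2Space ((Unit →₀ ℕ) → ℚ))

lemma coeff_eq_apply (p : PowerSeries ℚ) (σ : Unit →₀ ℕ) : p σ = coeff (R := ℚ) (σ ()) p := by
  conv_lhs => rw [Finsupp.unique_single σ]
  rfl

lemma tendsto_ps {ι : Type*} {F : ι → PowerSeries ℚ} {l : Filter ι} {P : PowerSeries ℚ} :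
    Filter.Tendsto F l (nhds P) ↔
      ∀ n : ℕ, Filter.Tendsto (fun i => coeff (R := ℚ) n (F i)) l (nhds (coeff (R := ℚ) n P)) := by
  rw [show (nhds P) = @nhds ((Unit →₀ ℕ) → ℚ) _ P from rfl]
  refine Iff.trans (tendsto_pi_nhds (A := fun _ : Unit →₀ ℕ => ℚ) (f := F) (g := P) (u := l)) ?_
  constructor
  · intro h n
    simpa [coeff_eq_apply] using h (Finsupp.single () n)
  · intro h σ
    simpa [coeff_eq_apply] using h (σ ())

instance : ContinuousMul (PowerSeries ℚ) := by
  constructor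
  apply continuous_pi
  intro σ
  simp only [coeff_eq_apply, coeff_mul]
  apply continuous_finset_sum
  rintro ⟨i, j⟩ -
  exact ((continuous_apply (Finsupp.single () i)).comp continuous_fst).mul
    ((continuous_apply (Finsupp.single () j)).comp continuous_snd)



instance : ContinuousAdd (PowerSeries ℚ) := by
  constructor
  apply continuous_pi
  intro σ
  simp only [coeff_eq_apply, map_add]
  exact ((continuous_apply (Finsupp.single () (σ ()))).comp continuous_fst).add
    ((continuous_apply (Finsupp.single () (σ ()))).comp continuous_snd)

instance : IsTopologicalSemiring (PowerSeries ℚ) := {}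

/-- `p` and `q` agree in coefficients up to `N`. -/
def near (N : ℕ) (p q : PowerSeries ℚ) : Prop := ∀ i, i ≤ N → coeff (R := ℚ) i p = coeff (R := ℚ) i q

lemma near.refl {N} (p : PowerSeries ℚ) : near N p p := fun _ _ => rfl

lemma near.symm {N} {p q : PowerSeries ℚ} (h : near N p q) : near N q p :=
  fun i hi => (h i hi).symm

lemma near.trans {N} {p q r : PowerSeries ℚ} (h : near N p q) (h' : near N q r) :
    near N p r := fun i hi => (h i hi).trans (h' i hi)

lemma near.mul {N} {p q p' q' : PowerSeries ℚ} (h : near N p p') (h' : near N q q') :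
    near N (p * q) (p' * q') := by
  intro i hi
  rw [coeff_mul, coeff_mul]
  apply Finset.sum_congr rfl
  rintro ⟨a, b⟩ hab
  rw [Finset.HasAntidiagonal.mem_antidiagonal] at hab
  rw [h a (le_trans (le_trans (Nat.le_add_right a b) hab.le) hi),
    h' b (le_trans (le_trans (Nat.le_add_left b a) hab.le) hi)]

lemma near.coeff {N} {p q : PowerSeries ℚ} (h : near N p q) : coeff (R := ℚ) N p = coeff (R := ℚ) N q :=
  h N le_rfl

lemma near_prod_one {N : ℕ} {f : ℕ → PowerSeries ℚ} (T : Finset ℕ)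
    (h : ∀ k ∈ T, near N (f k) 1) : near N (∏ k ∈ T, f k) 1 := by
  classical
  induction T using Finset.induction with
  | empty => simpa using near.refl 1
  | @insert a T' hx ih =>
    rw [Finset.prod_insert hx]
    have := (h a (Finset.mem_insert_self a T')).mul
      (ih fun k hk => h k (Finset.mem_insert_of_mem hk))
    simpa using this

/-- limit candidate of an infinite product -/
def limProd (f : ℕ → PowerSeries ℚ) : PowerSeries ℚ :=
  PowerSeries.mk fun N => coeff (R := ℚ) N (∏ k ∈ range (N + 1), f k)

lemma near_prod_range {f : ℕ → PowerSeries ℚ} (hf : ∀ N k, N < k → near N (f k) 1)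
    {N M M' : ℕ} (h : N < M) (h' : N < M') :
    near N (∏ k ∈ range M, f k) (∏ k ∈ range M', f k) := by
  have key : ∀ M, N < M → near N (∏ k ∈ range M, f k) (∏ k ∈ range (N + 1), f k) := by
    intro M hM
    obtain ⟨j, rfl⟩ := Nat.exists_eq_add_of_le hM
    rw [Finset.prod_range_add]
    have h1 : near N (∏ k ∈ range j, f (N + 1 + k)) 1 :=
      near_prod_one _ fun k _ => hf N _ (by omega)
    have := (near.refl (N := N) (∏ k ∈ range (N + 1), f k)).mul h1
    simpa using this
  exact (key M h).trans (key M' h').symm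

lemma coeff_limProd {f : ℕ → PowerSeries ℚ} (hf : ∀ N k, N < k → near N (f k) 1)
    {i M : ℕ} (h : i < M) : coeff (R := ℚ) i (limProd f) = coeff (R := ℚ) i (∏ k ∈ range M, f k) := by
  rw [limProd, coeff_mk]
  exact (near_prod_range hf (Nat.lt_succ_self i) h).coeff

lemma near_limProd {f : ℕ → PowerSeries ℚ} (hf : ∀ N k, N < k → near N (f k) 1)
    {N M : ℕ} (h : N < M) : near N (limProd f) (∏ k ∈ range M, f k) :=
  fun i hi => by
    rw [limProd, coeff_mk]
    exact (near_prod_range hf (Nat.lt_succ_self i) (lt_of_le_of_lt hi h)).coeff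

lemma hasProd_of_near {f : ℕ → PowerSeries ℚ} (hf : ∀ N k, N < k → near N (f k) 1) :
    HasProd f (limProd f) := by
  rw [HasProd, tendsto_ps]
  intro n
  apply Filter.Tendsto.congr' (f₁ := fun _ => coeff (R := ℚ) n (limProd f))
  · filter_upwards [Filter.eventually_ge_atTop (range (n + 1))] with S hS
    rw [← Finset.prod_sdiff hS]
    have h1 : near n (∏ k ∈ S \ range (n + 1), f k) 1 :=
      near_prod_one _ fun k hk => by
        have := (Finset.mem_sdiff.mp hk).2
        exact hf n k (by simpa using this)
    have h2 : near n (limProd f) ((∏ k ∈ S \ range (n + 1), f k) * ∏ k ∈ range (n + 1), f k) := by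
      have := h1.mul (near.refl (N := n) (∏ k ∈ range (n + 1), f k))
      rw [one_mul] at this
      exact (near_limProd hf (Nat.lt_succ_self n)).trans this.symm
    exact h2.coeff
  · exact tendsto_const_nhds

lemma tprod_eq_limProd {f : ℕ → PowerSeries ℚ} (hf : ∀ N k, N < k → near N (f k) 1) :
    (∏' k, f k) = limProd f := (hasProd_of_near hf).tprod_eq

lemma hasSum_iff_coeff {f : ℕ → PowerSeries ℚ} {P : PowerSeries ℚ} :
    HasSum f P ↔ ∀ n : ℕ, HasSum (fun k => coeff (R := ℚ) n (f k)) (coeff (R := ℚ) n P) := by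
  rw [HasSum, tendsto_ps]
  apply forall_congr'
  intro n
  rw [HasSum]
  simp only [map_sum]

-- poch lemmas
lemma near_one_factor {ε : ℚ} {e N : ℕ} (h : N < e) :
    near N (1 - PowerSeries.C (R := ℚ) ε * PowerSeries.X ^ e) 1 := by
  intro i hi
  rw [map_sub, coeff_one]
  have : (coeff (R := ℚ) i) (PowerSeries.C (R := ℚ) ε * PowerSeries.X ^ e) = 0 := by
    rw [coeff_C_mul, coeff_X_pow, if_neg (by omega), mul_zero]
  rw [this, sub_zero]

lemma poch_near (ε : ℚ) {b d : ℕ} (hb : 1 ≤ b) (hd : 1 ≤ d) :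
    ∀ N k, N < k → near N (1 - PowerSeries.C (R := ℚ) ε * PowerSeries.X ^ (b + d * k)) 1 := by
  intro N k hk
  apply near_one_factor
  have : k ≤ d * k := Nat.le_mul_of_pos_left k hd
  omega

lemma pochInf_eq_limProd (ε : ℚ) {b d : ℕ} (hb : 1 ≤ b) (hd : 1 ≤ d) :
    pochInf ε b d = limProd (fun k => 1 - PowerSeries.C (R := ℚ) ε * PowerSeries.X ^ (b + d * k)) :=
  tprod_eq_limProd (poch_near ε hb hd)

lemma near_pochInf (ε : ℚ) {b d : ℕ} (hb : 1 ≤ b) (hd : 1 ≤ d) {N M : ℕ} (h : N < M) :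
    near N (pochInf ε b d) (pochFin ε b d M) := by
  rw [pochInf_eq_limProd ε hb hd]
  exact near_limProd (poch_near ε hb hd) h

lemma pochFin_add (ε : ℚ) (b d m j : ℕ) :
    pochFin ε b d (m + j) = pochFin ε b d m * pochFin ε (b + d * m) d j := by
  rw [pochFin, pochFin, pochFin, Finset.prod_range_add]
  congr 1
  apply Finset.prod_congr rfl
  intro k _
  congr 2
  ring

lemma pochInf_split (ε : ℚ) {b d : ℕ} (hb : 1 ≤ b) (hd : 1 ≤ d) (m : ℕ) :
    pochInf ε b d = pochFin ε b d m * pochInf ε (b + d * m) d := by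
  ext i
  have h1 : near i (pochInf ε b d) (pochFin ε b d (m + (i + 1))) :=
    near_pochInf ε hb hd (by omega)
  have h2 : near i (pochFin ε b d m * pochInf ε (b + d * m) d)
      (pochFin ε b d m * pochFin ε (b + d * m) d (i + 1)) :=
    (near.refl _).mul (near_pochInf ε (by omega) hd (by omega))
  rw [h1.coeff, h2.coeff, pochFin_add]


namespace Theorems100
variable {α : Type*}
open Finset.HasAntidiagonal
universe u
variable {ι : Type u}

/-- A convenience constructor for the power series whose coefficients indicate a subset. -/
def indicatorSeries (α : Type*) [Semiring α] (s : Set ℕ) : PowerSeries α :=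
  PowerSeries.mk fun n => if n ∈ s then 1 else 0

theorem coeff_indicator (s : Set ℕ) [Semiring α] (n : ℕ) :
    coeff (R := α) n (indicatorSeries _ s) = if n ∈ s then 1 else 0 :=
  coeff_mk _ _

theorem coeff_indicator_pos (s : Set ℕ) [Semiring α] (n : ℕ) (h : n ∈ s) :
    coeff (R := α) n (indicatorSeries _ s) = 1 := by rw [coeff_indicator, if_pos h]

theorem coeff_indicator_neg (s : Set ℕ) [Semiring α] (n : ℕ) (h : n ∉ s) :
    coeff (R := α) n (indicatorSeries _ s) = 0 := by rw [coeff_indicator, if_neg h]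

theorem constantCoeff_indicator (s : Set ℕ) [Semiring α] :
    constantCoeff (R := α) (indicatorSeries _ s) = if 0 ∈ s then 1 else 0 :=
  rfl

theorem two_series (i : ℕ) [Semiring α] :
    1 + (X : PowerSeries α) ^ i.succ = indicatorSeries α {0, i.succ} := by
  ext n
  simp only [coeff_indicator, coeff_one, coeff_X_pow, Set.mem_insert_iff, Set.mem_singleton_iff,
    map_add]
  cases' n with d
  · simp [(Nat.succ_ne_zero i).symm]
  · simp [Nat.succ_ne_zero d]

theorem num_series' [Field α] (i : ℕ) :
    (1 - (X : PowerSeries α) ^ (i + 1))⁻¹ = indicatorSeries α {k | i + 1 ∣ k} := by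
  rw [PowerSeries.inv_eq_iff_mul_eq_one]
  · ext n
    rw [mul_sub, mul_one, map_sub, mul_comm, coeff_X_pow_mul', coeff_indicator, coeff_one]
    by_cases h : i + 1 ≤ n
    · rw [if_pos h, coeff_indicator]
      have hd : (i + 1 ∣ n - (i + 1) ↔ i + 1 ∣ n) :=
        ⟨fun h' => by have := Nat.dvd_add h' (dvd_refl (i + 1)); rwa [Nat.sub_add_cancel h] at this,
          fun h' => Nat.dvd_sub h' dvd_rfl⟩
      simp only [Set.mem_setOf_eq, hd, sub_self, if_neg (by omega : n ≠ 0)]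
    · rw [if_neg h, sub_zero]
      by_cases hn : n = 0
      · subst hn; simp
      · have : ¬ (i + 1 ∣ n) := fun hd => hn (Nat.eq_zero_of_dvd_of_lt hd (by omega))
        simp [this, hn]
  · simp [zero_pow]

def mkOdd : ℕ ↪ ℕ :=
  ⟨fun i => 2 * i + 1, fun x y h => by linarith⟩

-- The main workhorse of the partition theorem proof.
theorem partialGF_prop (α : Type*) [CommSemiring α] (n : ℕ) (s : Finset ℕ) (hs : ∀ i ∈ s, 0 < i)
    (c : ℕ → Set ℕ) (hc : ∀ i, i ∉ s → 0 ∈ c i) :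
    #{p : n.Partition | (∀ j, p.parts.count j ∈ c j) ∧ ∀ j ∈ p.parts, j ∈ s} =
      coeff (R := α) n (∏ i ∈ s, indicatorSeries α ((· * i) '' c i)) := by
  simp_rw [coeff_prod, coeff_indicator, prod_boole, sum_boole]
  apply congr_arg
  simp only [mem_univ, forall_true_left, not_and, not_forall, exists_prop,
    Set.mem_image, not_exists]
  set φ : (a : Nat.Partition n) →
    a ∈ filter (fun p ↦ (∀ (j : ℕ), Multiset.count j p.parts ∈ c j) ∧ ∀ j ∈ p.parts, j ∈ s) univ →
    ℕ →₀ ℕ := fun p _ => {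
      toFun := fun i => Multiset.count i p.parts • i
      support := Finset.filter (fun i => i ≠ 0) p.parts.toFinset
      mem_support_toFun := fun a => by
        simp only [smul_eq_mul, ne_eq, mul_eq_zero, Multiset.count_eq_zero]
        rw [not_or, not_not]
        simp only [Multiset.mem_toFinset, not_not, mem_filter] }
  refine Finset.card_bij φ ?_ ?_ ?_
  · intro a ha
    simp only [φ, not_forall, not_exists, not_and, exists_prop, mem_filter]
    rw [mem_finsuppAntidiag]
    dsimp only [ne_eq, smul_eq_mul, id_eq, eq_mpr_eq_cast, le_eq_subset, Finsupp.coe_mk]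
    simp only [mem_univ, forall_true_left, not_and, not_forall, exists_prop,
      mem_filter, true_and] at ha
    refine ⟨⟨?_, fun i ↦ ?_⟩, fun i _ ↦ ⟨a.parts.count i, ha.1 i, rfl⟩⟩
    · conv_rhs => simp [← a.parts_sum]
      rw [sum_multiset_count_of_subset _ s]
      · simp only [smul_eq_mul]
      · intro i
        simp only [Multiset.mem_toFinset, not_not, mem_filter]
        apply ha.2
    · simp only [ne_eq, Multiset.mem_toFinset, not_not, mem_filter, and_imp]
      exact fun hi _ ↦ ha.2 i hi
  · intro p₁ hp₁ p₂ hp₂ h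
    apply Nat.Partition.ext
    simp only [true_and, mem_univ, mem_filter] at hp₁ hp₂
    ext i
    simp only [φ, ne_eq, Multiset.mem_toFinset, not_not, smul_eq_mul, Finsupp.mk.injEq] at h
    by_cases hi : i = 0
    · rw [hi]
      rw [Multiset.count_eq_zero_of_notMem]
      · rw [Multiset.count_eq_zero_of_notMem]
        intro a; exact Nat.lt_irrefl 0 (hs 0 (hp₂.2 0 a))
      intro a; exact Nat.lt_irrefl 0 (hs 0 (hp₁.2 0 a))
    · rw [← mul_left_inj' hi]
      rw [funext_iff] at h
      exact h.2 i
  · simp only [φ, mem_filter, mem_finsuppAntidiag, mem_univ, exists_prop, true_and, and_assoc]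
    rintro f ⟨hf, hf₃, hf₄⟩
    have hf' : f ∈ finsuppAntidiag s n := mem_finsuppAntidiag.mpr ⟨hf, hf₃⟩
    simp only [mem_finsuppAntidiag] at hf'
    refine ⟨⟨∑ i ∈ s, Multiset.replicate (f i / i) i, ?_, ?_⟩, ?_, ?_, ?_⟩
    · intro i hi
      simp only [exists_prop, Multiset.mem_sum, mem_map, Function.Embedding.coeFn_mk] at hi
      rcases hi with ⟨t, ht, z⟩
      apply hs
      rwa [Multiset.eq_of_mem_replicate z]
    · simp_rw [Multiset.sum_sum, Multiset.sum_replicate, Nat.nsmul_eq_mul]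
      rw [← hf'.1]
      refine sum_congr rfl fun i hi => Nat.div_mul_cancel ?_
      rcases hf₄ i hi with ⟨w, _, hw₂⟩
      rw [← hw₂]
      exact dvd_mul_left _ _
    · intro i
      simp_rw [Multiset.count_sum', Multiset.count_replicate, sum_ite_eq']
      split_ifs with h
      · rcases hf₄ i h with ⟨w, hw₁, hw₂⟩
        rwa [← hw₂, Nat.mul_div_cancel _ (hs i h)]
      · exact hc _ h
    · intro i hi
      rw [Multiset.mem_sum] at hi
      rcases hi with ⟨j, hj₁, hj₂⟩
      rwa [Multiset.eq_of_mem_replicate hj₂]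
    · ext i
      simp_rw [Multiset.count_sum', Multiset.count_replicate, sum_ite_eq']
      simp only [ne_eq, Multiset.mem_toFinset, not_not, smul_eq_mul, ite_mul,
        zero_mul, Finsupp.coe_mk]
      split_ifs with h
      · apply Nat.div_mul_cancel
        rcases hf₄ i h with ⟨w, _, hw₂⟩
        apply Dvd.intro_left _ hw₂
      · apply symm
        rw [← Finsupp.notMem_support_iff]
        exact notMem_mono hf'.2 h


end Theorems100
open Theorems100

lemma constantCoeff_pochFin (ε : ℚ) {b : ℕ} (hb : 1 ≤ b) (d m : ℕ) :
    constantCoeff (R := ℚ) (pochFin ε b d m) = 1 := by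
  have h : near 0 (pochFin ε b d m) 1 :=
    near_prod_one _ (fun k _ => near_one_factor (by positivity))
  simpa using h.coeff

lemma constantCoeff_pochInf (ε : ℚ) {b d : ℕ} (hb : 1 ≤ b) (hd : 1 ≤ d) :
    constantCoeff (R := ℚ) (pochInf ε b d) = 1 := by
  have h := (near_pochInf ε hb hd (N := 0) (M := 1) (by omega)).coeff
  have h2 := constantCoeff_pochFin ε hb d 1
  simpa [h2] using h

/-- geometric-type series `(1 - X^(1+2k))⁻¹` -/
def Gso (k : ℕ) : PowerSeries ℚ := (1 - PowerSeries.X ^ (1 + 2 * k))⁻¹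

lemma Gso_eq (k : ℕ) : Gso k = indicatorSeries ℚ {m | 2 * k + 1 ∣ m} := by
  rw [Gso, Nat.add_comm 1 (2 * k), num_series']

lemma Gso_near : ∀ N k, N < k → near N (Gso k) 1 := by
  intro N k hk i hi
  rw [Gso_eq, coeff_indicator, coeff_one]
  have : 2 * k + 1 ∣ i ↔ i = 0 := by
    constructor
    · intro h
      exact Nat.eq_zero_of_dvd_of_lt h (by omega)
    · rintro rfl; exact dvd_zero _
  simp only [Set.mem_setOf_eq, this]

/-- the generating series of odd partitions, as a limit -/
def Vodd : PowerSeries ℚ := limProd Gso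

lemma constantCoeff_one_sub_X_pow {e : ℕ} (he : 1 ≤ e) :
    constantCoeff (R := ℚ) (1 - PowerSeries.X ^ e) = 1 := by
  rw [map_sub, map_one, map_pow, constantCoeff_X, zero_pow (by omega), sub_zero]

lemma pochInf_mul_Vodd : pochInf 1 1 2 * Vodd = 1 := by
  have hU : HasProd (fun k => 1 - PowerSeries.C (R := ℚ) 1 * PowerSeries.X ^ (1 + 2 * k))
      (limProd (fun k => 1 - PowerSeries.C (R := ℚ) 1 * PowerSeries.X ^ (1 + 2 * k))) :=
    hasProd_of_near (poch_near 1 le_rfl (by omega))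
  have hV : HasProd Gso Vodd := hasProd_of_near Gso_near
  have hprod := hU.mul hV
  have hone : (fun k => (1 - PowerSeries.C (R := ℚ) 1 * PowerSeries.X ^ (1 + 2 * k)) * Gso k) =
      fun _ => (1 : PowerSeries ℚ) := by
    funext k
    rw [map_one, one_mul, Gso]
    exact PowerSeries.mul_inv_cancel _ (by rw [constantCoeff_one_sub_X_pow (by omega)]; norm_num)
  rw [hone] at hprod
  have := hasProd_one.unique hprod
  rw [pochInf_eq_limProd 1 le_rfl (by omega)]
  exact this.symm

lemma inv_pochInf_eq_Vodd : (pochInf 1 1 2)⁻¹ = Vodd := by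
  have hc : constantCoeff (R := ℚ) (pochInf 1 1 2) ≠ 0 := by
    rw [constantCoeff_pochInf 1 le_rfl (by omega)]; norm_num
  calc (pochInf 1 1 2)⁻¹ = (pochInf 1 1 2)⁻¹ * (pochInf 1 1 2 * Vodd) := by
        rw [pochInf_mul_Vodd, mul_one]
    _ = ((pochInf 1 1 2)⁻¹ * pochInf 1 1 2) * Vodd := by ring
    _ = Vodd := by rw [PowerSeries.inv_mul_cancel _ hc, one_mul]

lemma term_eq (m n : ℕ) :
    pochInf (-1) 2 2 * (pochInf 1 1 2)⁻¹ *
        (PowerSeries.X ^ m * (pochFin (-1) 2 2 (n + 1))⁻¹) =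
      PowerSeries.X ^ m * (pochInf (-1) (2 + 2 * (n + 1)) 2 * Vodd) := by
  rw [inv_pochInf_eq_Vodd, pochInf_split (-1) (by omega) (by omega) (n + 1)]
  have hF : pochFin (-1) 2 2 (n + 1) * (pochFin (-1) 2 2 (n + 1))⁻¹ = 1 :=
    PowerSeries.mul_inv_cancel _ (by rw [constantCoeff_pochFin _ (by omega)]; norm_num)
  calc pochFin (-1) 2 2 (n+1) * pochInf (-1) (2 + 2*(n+1)) 2 * Vodd *
        (PowerSeries.X ^ m * (pochFin (-1) 2 2 (n + 1))⁻¹)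
      = PowerSeries.X ^ m * (pochInf (-1) (2 + 2*(n+1)) 2 * Vodd) *
        (pochFin (-1) 2 2 (n+1) * (pochFin (-1) 2 2 (n + 1))⁻¹) := by ring
    _ = _ := by rw [hF, mul_one]

lemma hasSum_of_vanish (f : ℕ → PowerSeries ℚ) (hf : ∀ N n, N < n → coeff (R := ℚ) N (f n) = 0) :
    HasSum f (PowerSeries.mk fun N => ∑ n ∈ range (N + 1), coeff (R := ℚ) N (f n)) := by
  rw [hasSum_iff_coeff]
  intro N
  rw [coeff_mk]
  apply hasSum_sum_of_ne_finset_zero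
  intro n hn
  exact hf N n (by simpa using hn)


lemma parts_le {N : ℕ} (p : N.Partition) {j : ℕ} (hj : j ∈ p.parts) : j ≤ N := by
  have h := Multiset.single_le_sum (fun x _ => Nat.zero_le x) j hj
  rwa [p.parts_sum] at h

lemma pmex_spec {N : ℕ} (p : N.Partition) : 0 < pmex p ∧ pmex p ∉ p.parts := by
  have hne : (N + 1) ∈ {k : ℕ | 0 < k ∧ k ∉ p.parts} :=
    ⟨Nat.succ_pos N, fun h => by have := parts_le p h; omega⟩
  exact Nat.sInf_mem ⟨N + 1, hne⟩

lemma pmex_le {N : ℕ} (p : N.Partition) {k : ℕ} (h0 : 0 < k) (h1 : k ∉ p.parts) :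
    pmex p ≤ k := Nat.sInf_le ⟨h0, h1⟩

lemma mem_of_lt_pmex {N : ℕ} (p : N.Partition) {k : ℕ} (h0 : 0 < k) (h1 : k < pmex p) :
    k ∈ p.parts := by
  by_contra h
  exact absurd (pmex_le p h0 h) (by omega)

lemma pmex_le_bound {N : ℕ} (p : N.Partition) : pmex p ≤ N + 1 :=
  pmex_le p (Nat.succ_pos N) (fun h => by have := parts_le p h; omega)

lemma pmex_eq_iff {N : ℕ} (p : N.Partition) {m : ℕ} :
    pmex p = m ↔ 0 < m ∧ m ∉ p.parts ∧ ∀ k, 0 < k → k < m → k ∈ p.parts := by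
  constructor
  · rintro rfl
    exact ⟨(pmex_spec p).1, (pmex_spec p).2, fun k hk hk' => mem_of_lt_pmex p hk hk'⟩
  · rintro ⟨h0, hnot, hall⟩
    have h2 := pmex_spec p
    rcases lt_trichotomy (pmex p) m with h | h | h
    · exact absurd (hall _ h2.1 h) h2.2
    · exact h
    · exact absurd (pmex_le p h0 hnot) (by omega)

lemma aeed_eq_sum (N : ℕ) :
    aeed N = ∑ n ∈ range (N + 1),
      #(Finset.univ.filter fun p : N.Partition => EvenDistinct p ∧ pmex p = 2 * n + 2) := by
  rw [aeed]
  have hset : (Finset.univ.filter fun p : N.Partition => EvenDistinct p ∧ Even (pmex p)) =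
      (range (N + 1)).biUnion
        (fun n => Finset.univ.filter fun p : N.Partition => EvenDistinct p ∧ pmex p = 2 * n + 2) := by
    ext p
    simp only [Finset.mem_filter, Finset.mem_biUnion, Finset.mem_range, Finset.mem_univ, true_and]
    constructor
    · rintro ⟨hED, hEven⟩
      obtain ⟨r, hr⟩ := hEven
      have h1 := (pmex_spec p).1
      have h2 := pmex_le_bound p
      exact ⟨r - 1, by omega, hED, by omega⟩
    · rintro ⟨n, _, hED, heq⟩
      exact ⟨hED, by rw [heq]; exact ⟨n + 1, by ring⟩⟩
  rw [hset, Finset.card_biUnion]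
  intro a ha b hb hab
  rw [Function.onFun, Finset.disjoint_left]
  intro p hpa hpb
  simp only [Finset.mem_filter] at hpa hpb
  omega

/-- the multiplicity constraints describing partitions with distinct even parts and mex `2n+2` -/
def cfun (n : ℕ) : ℕ → Set ℕ := fun j =>
  if j = 0 then Set.univ
  else if j < 2 * n + 2 then (if Even j then {1} else {k | 0 < k})
  else if j = 2 * n + 2 then {0}
  else if Even j then {0, 1} else Set.univ

lemma pred_equiv (N n : ℕ) (p : N.Partition) :
    ((∀ j, p.parts.count j ∈ cfun n j) ∧
        ∀ j ∈ p.parts, j ∈ (range (2 * N + 2 * n + 5)).filter (fun i => 0 < i)) ↔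
      EvenDistinct p ∧ pmex p = 2 * n + 2 := by
  constructor
  · rintro ⟨h1, _⟩
    constructor
    · intro i hi
      have hh := h1 i
      by_cases h0 : i = 0
      · subst h0
        rw [Multiset.count_eq_zero_of_notMem (fun h => by exact absurd (p.parts_pos h) (by omega))]
        omega
      · rw [cfun, if_neg h0] at hh
        by_cases hlt : i < 2 * n + 2
        · rw [if_pos hlt, if_pos hi] at hh
          simp only [Set.mem_singleton_iff] at hh
          omega
        · rw [if_neg hlt] at hh
          by_cases heq : i = 2 * n + 2
          · rw [if_pos heq] at hh
            simp only [Set.mem_singleton_iff] at hh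
            omega
          · rw [if_neg heq, if_pos hi] at hh
            simp only [Set.mem_insert_iff, Set.mem_singleton_iff] at hh
            omega
    · rw [pmex_eq_iff]
      refine ⟨by omega, ?_, ?_⟩
      · have hh := h1 (2 * n + 2)
        rw [cfun, if_neg (by omega), if_neg (by omega), if_pos rfl] at hh
        simp only [Set.mem_singleton_iff] at hh
        rw [← Multiset.count_eq_zero]
        exact hh
      · intro k hk hk'
        have hh := h1 k
        rw [cfun, if_neg (by omega), if_pos hk'] at hh
        rw [← Multiset.count_pos]
        by_cases he : Even k
        · rw [if_pos he] at hh
          simp only [Set.mem_singleton_iff] at hh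
          omega
        · rw [if_neg he] at hh
          exact hh
  · rintro ⟨hED, hpm⟩
    rw [pmex_eq_iff] at hpm
    obtain ⟨-, hnot, hall⟩ := hpm
    constructor
    · intro j
      rw [cfun]
      by_cases h0 : j = 0
      · rw [if_pos h0]; trivial
      rw [if_neg h0]
      by_cases hlt : j < 2 * n + 2
      · rw [if_pos hlt]
        have hmem : j ∈ p.parts := hall j (by omega) hlt
        have hpos : 0 < p.parts.count j := Multiset.count_pos.mpr hmem
        by_cases he : Even j
        · rw [if_pos he]
          have := hED j he
          simp only [Set.mem_singleton_iff]
          omega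
        · rw [if_neg he]
          exact hpos
      · rw [if_neg hlt]
        by_cases heq : j = 2 * n + 2
        · rw [if_pos heq]
          simp only [Set.mem_singleton_iff]
          rw [Multiset.count_eq_zero]
          rw [heq]
          exact hnot
        · rw [if_neg heq]
          by_cases he : Even j
          · rw [if_pos he]
            have := hED j he
            simp only [Set.mem_insert_iff, Set.mem_singleton_iff]
            omega
          · rw [if_neg he]; trivial
    · intro j hj
      rw [Finset.mem_filter, Finset.mem_range]
      have := parts_le p hj
      exact ⟨by omega, p.parts_pos hj⟩

lemma card_A_eq (N n : ℕ) :
    (#(Finset.univ.filter fun p : N.Partition => EvenDistinct p ∧ pmex p = 2 * n + 2) : ℚ) =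
      coeff (R := ℚ) N (∏ i ∈ (range (2 * N + 2 * n + 5)).filter (fun i => 0 < i),
        indicatorSeries ℚ ((· * i) '' cfun n i)) := by
  rw [← Theorems100.partialGF_prop ℚ N ((range (2 * N + 2 * n + 5)).filter (fun i => 0 < i))
    (fun i hi => (Finset.mem_filter.mp hi).2) (cfun n)
    (fun i hi => by
      rw [cfun]
      by_cases h0 : i = 0
      · rw [if_pos h0]; trivial
      · have hK : ¬ i < 2 * N + 2 * n + 5 := by
          intro h
          exact hi (Finset.mem_filter.mpr ⟨Finset.mem_range.mpr h, by omega⟩)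
        rw [if_neg h0, if_neg (by omega), if_neg (by omega)]
        by_cases he : Even i
        · rw [if_pos he]; simp
        · rw [if_neg he]; trivial)]
  congr 1
  apply Finset.card_bij (fun p _ => p)
  · intro p hp
    rw [Finset.mem_filter] at hp ⊢
    exact ⟨Finset.mem_univ p, (pred_equiv N n p).mpr hp.2⟩
  · intro p _ q _ h
    exact h
  · intro p hp
    rw [Finset.mem_filter] at hp
    refine ⟨p, ?_, rfl⟩
    rw [Finset.mem_filter]
    exact ⟨Finset.mem_univ p, (pred_equiv N n p).mp hp.2⟩


def Ginv (i : ℕ) : PowerSeries ℚ := (1 - PowerSeries.X ^ i)⁻¹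

lemma Ginv_eq_indicator {i : ℕ} (hi : 0 < i) : Ginv i = indicatorSeries ℚ {m | i ∣ m} := by
  obtain ⟨i', rfl⟩ : ∃ i', i = i' + 1 := ⟨i - 1, by omega⟩
  exact num_series' i'

lemma indicator_singleton (i : ℕ) : indicatorSeries ℚ {i} = PowerSeries.X ^ i := by
  ext m
  rw [coeff_indicator, coeff_X_pow]
  simp [Set.mem_singleton_iff]

lemma L_univ {i : ℕ} (hi : 0 < i) :
    indicatorSeries ℚ ((· * i) '' (Set.univ : Set ℕ)) = Ginv i := by
  rw [Ginv_eq_indicator hi]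
  have hset : ((· * i) '' (Set.univ : Set ℕ)) = {m | i ∣ m} := by
    ext m
    simp only [Set.image_univ, Set.mem_range, Set.mem_setOf_eq]
    constructor
    · rintro ⟨k, rfl⟩; exact Dvd.intro_left k rfl
    · rintro ⟨c, rfl⟩; exact ⟨c, by ring⟩
  rw [hset]

lemma L_one (i : ℕ) : indicatorSeries ℚ ((· * i) '' {1}) = PowerSeries.X ^ i := by
  rw [Set.image_singleton, one_mul, indicator_singleton]

lemma L_zero (i : ℕ) : indicatorSeries ℚ ((· * i) '' {0}) = 1 := by
  rw [Set.image_singleton, zero_mul]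
  ext m
  rw [coeff_indicator, coeff_one]
  simp [Set.mem_singleton_iff, eq_comm]

lemma L_two {i : ℕ} (hi : 0 < i) :
    indicatorSeries ℚ ((· * i) '' {0, 1}) = 1 + PowerSeries.X ^ i := by
  obtain ⟨i', rfl⟩ : ∃ i', i = i' + 1 := ⟨i - 1, by omega⟩
  rw [two_series]
  congr 1
  ext m
  simp only [Set.image_insert_eq, Set.image_singleton, zero_mul, one_mul]

lemma L_pos {i : ℕ} (hi : 0 < i) :
    indicatorSeries ℚ ((· * i) '' {k | 0 < k}) = PowerSeries.X ^ i * Ginv i := by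
  ext m
  rw [coeff_X_pow_mul', coeff_indicator]
  by_cases him : i ≤ m
  · rw [if_pos him, Ginv_eq_indicator hi, coeff_indicator]
    have hiff : (m ∈ (· * i) '' {k | 0 < k}) ↔ (m - i ∈ {m | i ∣ m}) := by
      simp only [Set.mem_image, Set.mem_setOf_eq]
      constructor
      · rintro ⟨k, hk, rfl⟩
        exact Nat.dvd_sub (Dvd.intro_left k rfl) dvd_rfl
      · rintro ⟨c, hc⟩
        have hm : m = i * c + i := by
          have := (Nat.sub_eq_iff_eq_add him).mp hc
          omega
        exact ⟨c + 1, by omega, by rw [hm]; ring⟩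
    rw [if_congr hiff rfl rfl]
    split_ifs <;> rfl
  · have hnm : m ∉ (· * i) '' {k | 0 < k} := by
      rintro ⟨k, hk, rfl⟩
      simp only [Set.mem_setOf_eq] at hk
      exact him (Nat.le_mul_of_pos_left i hk)
    rw [if_neg him, if_neg hnm]

lemma factor_eq (n : ℕ) {i : ℕ} (hi : 0 < i) :
    indicatorSeries ℚ ((· * i) '' cfun n i) =
      (if i < 2 * n + 2 then PowerSeries.X ^ i else 1) *
        ((if Even i then 1 else Ginv i) *
          (if Even i ∧ 2 * n + 2 < i then 1 + PowerSeries.X ^ i else 1)) := by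
  rcases Nat.even_or_odd i with he | ho
  · rcases lt_trichotomy i (2 * n + 2) with h | h | h
    · rw [cfun, if_neg (by omega), if_pos h, if_pos he, L_one,
        if_pos h, if_pos he, if_neg (by omega)]
      ring
    · rw [cfun, if_neg (by omega), if_neg (by omega), if_pos h, L_zero,
        if_neg (by omega), if_pos he, if_neg (by omega)]
      ring
    · rw [cfun, if_neg (by omega), if_neg (by omega), if_neg (by omega), if_pos he,
        L_two hi, if_neg (by omega), if_pos he, if_pos ⟨he, h⟩]
      ring
  · have he : ¬ Even i := Nat.not_even_iff_odd.mpr ho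
    rcases lt_or_ge i (2 * n + 2) with h | h
    · rw [cfun, if_neg (by omega), if_pos h, if_neg he, L_pos hi,
        if_pos h, if_neg he, if_neg (by simp [he])]
      ring
    · have hne : i ≠ 2 * n + 2 := by
        rintro rfl
        exact he ⟨n + 1, by ring⟩
      rw [cfun, if_neg (by omega), if_neg (by omega), if_neg hne, if_neg he, L_univ hi,
        if_neg (by omega), if_neg he, if_neg (by simp [he])]
      ring

lemma prod_factors (N n : ℕ) :
    (∏ i ∈ (range (2 * N + 2 * n + 5)).filter (fun i => 0 < i),
        indicatorSeries ℚ ((· * i) '' cfun n i)) =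
      PowerSeries.X ^ ((n + 1) * (2 * n + 1)) *
        ((∏ k ∈ range (N + n + 2), Gso k) * pochFin (-1) (2 * n + 4) 2 (N + 1)) := by
  set s : Finset ℕ := (range (2 * N + 2 * n + 5)).filter (fun i => 0 < i) with hs
  have h1 : ∀ i ∈ s, indicatorSeries ℚ ((· * i) '' cfun n i) =
      (if i < 2 * n + 2 then PowerSeries.X ^ i else 1) *
        ((if Even i then 1 else Ginv i) *
          (if Even i ∧ 2 * n + 2 < i then 1 + PowerSeries.X ^ i else 1)) :=
    fun i hi => factor_eq n (Finset.mem_filter.mp hi).2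
  rw [Finset.prod_congr rfl h1, Finset.prod_mul_distrib, Finset.prod_mul_distrib]
  congr 1
  · rw [← Finset.prod_filter, Finset.prod_pow_eq_pow_sum]
    congr 1
    have hset : s.filter (fun i => i < 2 * n + 2) = (range (2 * n + 2)).erase 0 := by
      ext i
      simp only [hs, Finset.mem_filter, Finset.mem_range, Finset.mem_erase]
      omega
    rw [hset, Finset.sum_erase _ (by norm_num)]
    have hg := Finset.sum_range_id_mul_two (2 * n + 2)
    have h2 : (2 * n + 2) * (2 * n + 2 - 1) = 2 * ((n + 1) * (2 * n + 1)) := by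
      have e : 2 * n + 2 - 1 = 2 * n + 1 := by omega
      rw [e]; ring
    omega
  congr 1
  · have h2 : ∀ i ∈ s, (if Even i then (1 : PowerSeries ℚ) else Ginv i) =
        (if ¬ Even i then Ginv i else 1) := by
      intro i _
      by_cases h : Even i <;> simp [h]
    rw [Finset.prod_congr rfl h2, ← Finset.prod_filter]
    have hset : s.filter (fun i => ¬ Even i) =
        (range (N + n + 2)).map ⟨fun k => 1 + 2 * k, fun a b h => by dsimp only at h; omega⟩ := by
      ext i
      simp only [hs, Finset.mem_filter, Finset.mem_range, Finset.mem_map,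
        Function.Embedding.coeFn_mk, Nat.not_even_iff_odd]
      dsimp only [DFunLike.coe]
      constructor
      · rintro ⟨⟨hiK, hipos⟩, k, hk⟩
        exact ⟨k, by omega, by omega⟩
      · rintro ⟨k, hk, rfl⟩
        exact ⟨⟨by omega, by omega⟩, k, by omega⟩
    rw [hset, Finset.prod_map]
    rfl
  · rw [← Finset.prod_filter]
    have hset : s.filter (fun i => Even i ∧ 2 * n + 2 < i) =
        (range (N + 1)).map ⟨fun k => 2 * n + 4 + 2 * k, fun a b h => by dsimp only at h; omega⟩ := by
      ext i
      simp only [hs, Finset.mem_filter, Finset.mem_range, Finset.mem_map,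
        Function.Embedding.coeFn_mk]
      dsimp only [DFunLike.coe]
      constructor
      · rintro ⟨⟨hiK, hipos⟩, ⟨m, hm⟩, hgt⟩
        exact ⟨m - (n + 2), by omega, by omega⟩
      · rintro ⟨k, hk, rfl⟩
        exact ⟨⟨by omega, by omega⟩, ⟨n + 2 + k, by omega⟩, by omega⟩
    rw [hset, Finset.prod_map, pochFin]
    apply Finset.prod_congr rfl
    intro k _
    show (1 + PowerSeries.X ^ (2 * n + 4 + 2 * k) : PowerSeries ℚ) =
      1 - PowerSeries.C (R := ℚ) (-1) * PowerSeries.X ^ (2 * n + 4 + 2 * k)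
    rw [map_neg, map_one]
    ring


lemma en_arith (n : ℕ) : 2 * (n + 1) ^ 2 - (n + 1) = (n + 1) * (2 * n + 1) := by
  have h : 2 * (n + 1) ^ 2 = (n + 1) * (2 * n + 1) + (n + 1) := by ring
  omega

lemma hasSum_LHS :
    HasSum (fun n => PowerSeries.C (R := ℚ) (aeed n : ℚ) * PowerSeries.X ^ n)
      (PowerSeries.mk fun N => (aeed N : ℚ)) := by
  rw [hasSum_iff_coeff]
  intro N
  rw [coeff_mk]
  have heq : (fun k => coeff (R := ℚ) N (PowerSeries.C (R := ℚ) (aeed k : ℚ) * PowerSeries.X ^ k)) =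
      fun k => if k = N then ((aeed N : ℚ)) else 0 := by
    funext k
    rw [coeff_C_mul, coeff_X_pow]
    by_cases h : k = N
    · subst h; simp
    · simp [h, Ne.symm h]
  rw [heq]
  exact hasSum_ite_eq N _

lemma coeff_T' (N n : ℕ) :
    coeff (R := ℚ) N (PowerSeries.X ^ ((n + 1) * (2 * n + 1)) *
        (pochInf (-1) (2 * n + 4) 2 * Vodd)) =
      (#(Finset.univ.filter fun p : N.Partition =>
          EvenDistinct p ∧ pmex p = 2 * n + 2) : ℚ) := by
  have h1 : near N (PowerSeries.X ^ ((n + 1) * (2 * n + 1)) *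
        (pochInf (-1) (2 * n + 4) 2 * Vodd))
      (PowerSeries.X ^ ((n + 1) * (2 * n + 1)) *
        (pochFin (-1) (2 * n + 4) 2 (N + 1) * (∏ k ∈ range (N + n + 2), Gso k))) :=
    (near.refl _).mul ((near_pochInf (-1) (by omega) (by omega) (by omega)).mul
      (near_limProd Gso_near (by omega)))
  rw [h1.coeff, card_A_eq, prod_factors]
  congr 1
  ring


theorem stmt_12 :
    (∑' n : ℕ, PowerSeries.C (R := ℚ) (aeed n : ℚ) * PowerSeries.X ^ n) =
      pochInf (-1) 2 2 * (pochInf 1 1 2)⁻¹ *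
        ∑' n : ℕ, PowerSeries.X ^ (2 * (n + 1) ^ 2 - (n + 1)) * (pochFin (-1) 2 2 (n + 1))⁻¹ := by
  rw [hasSum_LHS.tsum_eq]
  have hvan : ∀ N n : ℕ, N < n →
      coeff (R := ℚ) N (PowerSeries.X ^ (2 * (n + 1) ^ 2 - (n + 1)) *
        (pochFin (-1) 2 2 (n + 1))⁻¹) = 0 := by
    intro N n h
    rw [coeff_X_pow_mul', if_neg]
    intro hle
    have hen : n + 1 ≤ (n + 1) * (2 * n + 1) := Nat.le_mul_of_pos_right _ (by omega)
    rw [en_arith] at hle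
    omega
  have hsum := hasSum_of_vanish _ hvan
  rw [hsum.tsum_eq]
  have hmul := hsum.mul_left (pochInf (-1) 2 2 * (pochInf 1 1 2)⁻¹)
  have hT' : (fun n => pochInf (-1) 2 2 * (pochInf 1 1 2)⁻¹ *
      (PowerSeries.X ^ (2 * (n + 1) ^ 2 - (n + 1)) * (pochFin (-1) 2 2 (n + 1))⁻¹)) =
      fun n => PowerSeries.X ^ ((n + 1) * (2 * n + 1)) * (pochInf (-1) (2 * n + 4) 2 * Vodd) := by
    funext n
    rw [term_eq, en_arith, show 2 + 2 * (n + 1) = 2 * n + 4 from by ring]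
  rw [hT'] at hmul
  ext N
  rw [coeff_mk]
  have h1 := hasSum_iff_coeff.mp hmul N
  have h2 : HasSum
      (fun n => coeff (R := ℚ) N (PowerSeries.X ^ ((n + 1) * (2 * n + 1)) *
        (pochInf (-1) (2 * n + 4) 2 * Vodd)))
      (∑ n ∈ range (N + 1), coeff (R := ℚ) N (PowerSeries.X ^ ((n + 1) * (2 * n + 1)) *
        (pochInf (-1) (2 * n + 4) 2 * Vodd))) := by
    apply hasSum_sum_of_ne_finset_zero
    intro n hn
    rw [Finset.mem_range, not_lt] at hn
    rw [coeff_X_pow_mul', if_neg]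
    intro hle
    have hen : n + 1 ≤ (n + 1) * (2 * n + 1) := Nat.le_mul_of_pos_right _ (by omega)
    omega
  have h3 := h1.unique h2
  rw [h3]
  rw [aeed_eq_sum N, Nat.cast_sum]
  exact Finset.sum_congr rfl fun n _ => (coeff_T' N n).symm



end
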